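/- arXiv:1807.01140 — 2 statements merged into one kernel-verified Lean document; each statement's English description precedes it below -/
import Mathlib

section
/- Let k > 0, π > 0 and c > 0 be real constants, g(n) = kπ·n^{-1/2} + kπ·c^{-1/2}, and f_t(n) = n/(kπ) + c·n^{-1/2} + c^{1/2}. For all n₁, n₂ with (c·kπ/2)^{2/3} ≤ n₂ < n₁, one has g(n₁) < g(n₂) and f_t(n₁) > f_t(n₂); that is, on the efficient branch n ≥ (c·kπ/2)^{2/3} of the parametric curve {(f_t(n), g(n)) : n > 0}, decreasing the fleet size strictly increases travel time. -/
/-!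
Both claims are monotonicity statements in `n > 0`. For `g` this is the strict decrease of
`n ^ (-1/2)`. For `f_t`, write `n = s²`: then `f_t = s² / (kπ) + c / s + √c`, and for `s > t > 0`
the difference `(s² - t²) / (kπ) - c (s - t) / (s t)` has the sign of `(s + t) s t - c kπ`, which is
positive as soon as `2 t³ ≥ c kπ`, i.e. as soon as `t² ≥ (c kπ / 2) ^ (2/3)`.
-/

section

-- closed before the theorem, where `π` must parse as a variable, not as `Real.pi`
open Real Set

lemma rpow_neg_half_eq_inv_sqrt {x : ℝ} (hx : 0 ≤ x) : x ^ (-(1/2) : ℝ) = (√x)⁻¹ := by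
  rw [rpow_neg hx, sqrt_eq_rpow]

lemma le_sqrt_pow_three_of_rpow_two_thirds_le {t x : ℝ} (ht : 0 ≤ t) (h : t ^ ((2:ℝ)/3) ≤ x) :
    t ≤ √x ^ 3 := by
  have hx : 0 ≤ x := (rpow_nonneg ht _).trans h
  calc t = (t ^ ((2:ℝ)/3)) ^ ((3:ℝ)/2) := by
        rw [← rpow_mul ht]; norm_num
    _ ≤ x ^ ((3:ℝ)/2) := rpow_le_rpow (rpow_nonneg ht _) h (by norm_num)
    _ = √x ^ 3 := by
        rw [sqrt_eq_rpow, ← rpow_natCast, ← rpow_mul hx]; norm_num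

lemma sq_div_add_div_lt {a c s t : ℝ} (ha : 0 < a) (ht : 0 < t) (hts : t < s)
    (hct : c * a ≤ 2 * t ^ 3) : t ^ 2 / a + c / t < s ^ 2 / a + c / s := by
  have hs : 0 < s := ht.trans hts
  have hcubic : c * a < (s + t) * s * t := by
    nlinarith [mul_lt_mul_of_pos_left hts (mul_pos ht ht)]
  rw [← sub_pos]
  have hdiff : s ^ 2 / a + c / s - (t ^ 2 / a + c / t) =
      (s - t) * ((s + t) * s * t - c * a) / (a * s * t) := by
    field_simp
    ring
  rw [hdiff]
  exact div_pos (mul_pos (sub_pos.2 hts) (sub_pos.2 hcubic)) (by positivity)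

theorem strictMonoOn_div_add_mul_rpow_neg_half {a c : ℝ} (ha : 0 < a) (hc : 0 < c) :
    StrictMonoOn (fun x : ℝ => x / a + c * x ^ (-(1/2) : ℝ)) (Ici ((c * a / 2) ^ ((2:ℝ)/3))) := by
  intro y hy x _ hyx
  have hbase : 0 < c * a / 2 := by positivity
  have hy0 : 0 < y := (rpow_pos_of_pos hbase _).trans_le hy
  have hx0 : 0 < x := hy0.trans hyx
  have hcube := le_sqrt_pow_three_of_rpow_two_thirds_le hbase.le hy
  have key := sq_div_add_div_lt (c := c) ha (sqrt_pos.2 hy0) (sqrt_lt_sqrt hy0.le hyx)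
    (by linarith)
  simp only [rpow_neg_half_eq_inv_sqrt hx0.le, rpow_neg_half_eq_inv_sqrt hy0.le]
  rwa [sq_sqrt hx0.le, sq_sqrt hy0.le] at key

end

/-- On the efficient branch n ≥ (c kπ/2)^{2/3} of the dial-a-ride model,
g(n) = kπ n^{-1/2} + kπ c^{-1/2} strictly decreases while
f_t(n) = n/(kπ) + c n^{-1/2} + c^{1/2} strictly increases. -/
theorem dar_efficient_branch (k π c : ℝ) (hk : 0 < k) (hπ : 0 < π) (hc : 0 < c)
    (n₁ n₂ : ℝ) (h₂ : (c * k * π / 2) ^ ((2:ℝ)/3) ≤ n₂) (h₁₂ : n₂ < n₁) :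
    (k * π * n₁ ^ (-(1/2) : ℝ) + k * π * c ^ (-(1/2) : ℝ) <
      k * π * n₂ ^ (-(1/2) : ℝ) + k * π * c ^ (-(1/2) : ℝ)) ∧
    (n₁ / (k * π) + c * n₁ ^ (-(1/2) : ℝ) + c ^ ((1:ℝ)/2) >
      n₂ / (k * π) + c * n₂ ^ (-(1/2) : ℝ) + c ^ ((1:ℝ)/2)) := by
  have hkπ : 0 < k * π := mul_pos hk hπ
  rw [mul_assoc c] at h₂
  have hn₂ : 0 < n₂ := (Real.rpow_pos_of_pos (by positivity) _).trans_le h₂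
  constructor
  · gcongr ?_ + _
    exact mul_lt_mul_of_pos_left
      (Real.strictAntiOn_rpow_Ioi_of_exponent_neg (by norm_num) hn₂ (hn₂.trans h₁₂) h₁₂) hkπ
  · gcongr ?_ + _
    exact strictMonoOn_div_add_mul_rpow_neg_half hkπ hc h₂ (h₂.trans h₁₂.le) h₁₂
end

section
/- Let k > 0, π > 0 and n > 0 be real numbers. If real numbers n₀₀, n₀₁, n₀₂, n₁₁, n₁₀, n₂₀ satisfy (i) n₀₀ + n₀₁ = n; (ii) π·n₀₁/n = n₀₂·n^{1/2}/k; (iii) π·n₀₁/n = n₁₁·n^{1/2}/k; (iv) π·n₀₁/n = n₂₀·√2/k; (v) π·n₀₀/n = n₁₀/k; (vi) n₀₁·n^{1/2}/k + n₂₀·√2/k = n₁₀/k, then necessarily, with D = 2kπ + n^{3/2}: n₀₀ = n(kπ + n^{3/2})/D, n₀₁ = kπ·n/D, n₀₂ = n₁₁ = (kπ)²/(n^{1/2}·D), n₁₀ = kπ(kπ + n^{3/2})/D, and n₂₀ = (kπ)²/(√2·D). In particular the linear system has a unique solution. -/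
/-!
Write `s = n^{1/2}`, so that `n^{3/2} = n s`. Equations (ii)–(v) each express one unknown as a
multiple of `n₀₁` or `n₀₀`; substituting (iv) and (v) into (vi) and using `n₀₀ = n - n₀₁`
leaves the single equation `n₀₁ (2kπ + n s) = kπ n`, and `2kπ + n s > 0` determines `n₀₁`,
hence everything else.
-/

section Field

variable {F : Type*} [Field F]

theorem eq_mul_div_of_eq_mul_div {a x s k : F} (hs : s ≠ 0) (hk : k ≠ 0)
    (h : a = x * s / k) : x = k * a / s := by
  rw [h]; field_simp

theorem unassigned_mul_eq_of_flow_balance {k π n s q n₀₀ n₀₁ n₁₀ n₂₀ : F} (hk : k ≠ 0)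
    (hn : n ≠ 0) (h1 : n₀₀ + n₀₁ = n) (h4 : π * n₀₁ / n = n₂₀ * q / k)
    (h5 : π * n₀₀ / n = n₁₀ / k) (h6 : n₀₁ * s / k + n₂₀ * q / k = n₁₀ / k) :
    n₀₁ * (2 * k * π + n * s) = k * π * n := by
  field_simp at h4 h5 h6
  linear_combination n * h6 + h4 - h5 + k * π * h1

end Field

/-- Any solution of the six steady-state equations (18) and (20) of the shared-taxi
(type b) model with c = 2 must be given by the explicit formulas (21):
the linear system has a unique solution. -/
theorem shared_taxi_solution_unique (k π n n₀₀ n₀₁ n₀₂ n₁₁ n₁₀ n₂₀ : ℝ)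
    (hk : 0 < k) (hπ : 0 < π) (hn : 0 < n)
    (h1 : n₀₀ + n₀₁ = n)
    (h2 : π * n₀₁ / n = n₀₂ * n ^ ((1:ℝ)/2) / k)
    (h3 : π * n₀₁ / n = n₁₁ * n ^ ((1:ℝ)/2) / k)
    (h4 : π * n₀₁ / n = n₂₀ * Real.sqrt 2 / k)
    (h5 : π * n₀₀ / n = n₁₀ / k)
    (h6 : n₀₁ * n ^ ((1:ℝ)/2) / k + n₂₀ * Real.sqrt 2 / k = n₁₀ / k) :
    n₀₀ = n * (k * π + n ^ ((3:ℝ)/2)) / (2 * k * π + n ^ ((3:ℝ)/2)) ∧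
    n₀₁ = k * π * n / (2 * k * π + n ^ ((3:ℝ)/2)) ∧
    n₀₂ = (k * π) ^ 2 / (n ^ ((1:ℝ)/2) * (2 * k * π + n ^ ((3:ℝ)/2))) ∧
    n₁₁ = (k * π) ^ 2 / (n ^ ((1:ℝ)/2) * (2 * k * π + n ^ ((3:ℝ)/2))) ∧
    n₁₀ = k * π * (k * π + n ^ ((3:ℝ)/2)) / (2 * k * π + n ^ ((3:ℝ)/2)) ∧
    n₂₀ = (k * π) ^ 2 / (Real.sqrt 2 * (2 * k * π + n ^ ((3:ℝ)/2))) := by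
  rw [show (3:ℝ)/2 = 1 + 1/2 by norm_num, Real.rpow_add hn, Real.rpow_one]
  set s := n ^ ((1:ℝ)/2)
  have hs : 0 < s := by positivity
  have hD : 2 * k * π + n * s ≠ 0 := by positivity
  have e₀₂ := eq_mul_div_of_eq_mul_div hs.ne' hk.ne' h2
  have e₁₁ := eq_mul_div_of_eq_mul_div hs.ne' hk.ne' h3
  have e₂₀ := eq_mul_div_of_eq_mul_div (by positivity) hk.ne' h4
  have e₁₀ : n₁₀ = k * (π * n₀₀ / n) := by rw [h5]; field_simp
  have e₀₁ : n₀₁ = k * π * n / (2 * k * π + n * s) :=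
    eq_div_of_mul_eq hD <| unassigned_mul_eq_of_flow_balance hk.ne' hn.ne' h1 h4 h5 h6
  have e₀₀ : n₀₀ = n - n₀₁ := by linarith
  refine ⟨?_, e₀₁, ?_, ?_, ?_, ?_⟩
  · rw [e₀₀, e₀₁]; field_simp; ring
  · rw [e₀₂, e₀₁]; field_simp
  · rw [e₁₁, e₀₁]; field_simp
  · rw [e₁₀, e₀₀, e₀₁]; field_simp; ring
  · rw [e₂₀, e₀₁]; field_simp
end
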